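/- arXiv:1409.2193 — 3 statements merged into one kernel-verified Lean document; each statement's English description precedes it below -/
import Mathlib

section
/- Let φ = Q₁x₁…Qₙxₙ(γ) be a quantified Boolean formula with alternating quantifiers Q₁ = ∃, Q₂ = ∀, …, n even, and γ a propositional formula over the variables x₁,…,xₙ. Let Env_φ be the two-agent environment encoding φ and let φ* be the formula ¬D_∅¬( D_{{σ(1)}}( agree(1) → ¬D_{{σ(2)}}¬( agree(2) ∧ D_{{σ(1)}}( agree(3) → ¬D_{{σ(2)}}¬( agree(4) ∧ … D_{{σ(1)}}( agree(n−1) → γ⁺ ) … ))))), where γ⁺ is obtained from γ by replacing every occurrence of x_j by val₂(x_j). Then φ is true (under the standard semantics of quantified Boolean formulas) if and only if Env_φ, Σ^{unif,det}(Env_φ) ⊨ φ*, i.e., φ* holds at (r,0) for every run r of I(Env_φ, Σ^{unif,det}(Env_φ)). -/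
namespace Paper

open Classical

/-- An environment for a set of agents. -/
structure Env (Agent State Obs Act PropV : Type) where
  init : Set State
  acts : Agent → Set Act
  trans : State → (Agent → Act) → State → Prop
  obs : Agent → State → Obs
  val : State → Set PropV
  acts_ne : ∀ i, (acts i).Nonempty
  serial : ∀ s a, (∀ i, a i ∈ acts i) → ∃ t, trans s a t

variable {Agent State Obs Act PropV Var Gl Idx Loc : Type}

/-- A strategy: a choice of a set of actions at each state. -/
abbrev Strategy (State Act : Type) := State → Set Act

def IsStrategy (E : Env Agent State Obs Act PropV) (i : Agent) (α : Strategy State Act) : Prop :=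
  ∀ s, (α s).Nonempty ∧ α s ⊆ E.acts i

def UniformStrat (E : Env Agent State Obs Act PropV) (i : Agent) (α : Strategy State Act) : Prop :=
  ∀ s t, E.obs i s = E.obs i t → α s = α t

def DetStrat (α : Strategy State Act) : Prop := ∀ s, ∃ a, α s = {a}

abbrev JointStrategy (Agent State Act : Type) := Agent → Strategy State Act

def IsJoint (E : Env Agent State Obs Act PropV) (α : JointStrategy Agent State Act) : Prop :=
  ∀ i, IsStrategy E i (α i)

/-- The set of all locally uniform joint strategies. -/
def SigmaUnif (E : Env Agent State Obs Act PropV) : Set (JointStrategy Agent State Act) :=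
  {α | ∀ i, IsStrategy E i (α i) ∧ UniformStrat E i (α i)}

/-- The set of all locally uniform deterministic joint strategies. -/
def SigmaUnifDet (E : Env Agent State Obs Act PropV) : Set (JointStrategy Agent State Act) :=
  {α | ∀ i, IsStrategy E i (α i) ∧ UniformStrat E i (α i) ∧ DetStrat (α i)}

/-- Indices for the components of a global state in strategy space:
the environment `e`, the basic agents, and the strategic agents `σ(i)`. -/
inductive SIdx (Agent : Type) : Type
  | env : SIdx Agent
  | ag : Agent → SIdx Agent
  | str : Agent → SIdx Agent

/-- Global states in strategy space: a state of the environment together with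
a joint strategy. -/
abbrev GState (Agent State Act : Type) := State × JointStrategy Agent State Act

/-- An interpreted system: a set of runs, a local-state function giving the
component of a global state for each index, and a propositional assignment. -/
structure IS (Gl Idx Loc PropV : Type) where
  runs : Set (ℕ → Gl)
  loc : Idx → Gl → Loc
  val : Gl → Set PropV

/-- Equality of the `i`-components of two global states. -/
def IS.sameLoc (M : IS Gl Idx Loc PropV) (i : Idx) (g g' : Gl) : Prop := M.loc i g = M.loc i g'

/-- Syntax of the extended temporal epistemic logic ETL/ESL. -/
inductive ESL (Idx PropV Var : Type) : Type
  | tt : ESL Idx PropV Var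
  | atom (p : PropV) : ESL Idx PropV Var
  | neg (φ : ESL Idx PropV Var) : ESL Idx PropV Var
  | conj (φ ψ : ESL Idx PropV Var) : ESL Idx PropV Var
  | next (φ : ESL Idx PropV Var) : ESL Idx PropV Var
  | until_ (φ ψ : ESL Idx PropV Var) : ESL Idx PropV Var
  | box (φ : ESL Idx PropV Var) : ESL Idx PropV Var
  | all (φ : ESL Idx PropV Var) : ESL Idx PropV Var
  | exv (x : Var) (φ : ESL Idx PropV Var) : ESL Idx PropV Var
  | leq (i : Idx) (x : Var) : ESL Idx PropV Var
  | dk (G : Set Idx) (φ : ESL Idx PropV Var) : ESL Idx PropV Var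
  | ck (G : Set Idx) (φ : ESL Idx PropV Var) : ESL Idx PropV Var

/-- The common-knowledge reachability relation on points: the reflexive-transitive
closure of the union over `i ∈ Grp` of the "same `i`-component" relations. -/
def ckRel (M : IS Gl Idx Loc PropV) (Grp : Set Idx) :
    ((ℕ → Gl) × ℕ) → ((ℕ → Gl) × ℕ) → Prop :=
  Relation.ReflTransGen (fun p q => q.1 ∈ M.runs ∧ ∃ i ∈ Grp, M.sameLoc i (p.1 p.2) (q.1 q.2))

variable [DecidableEq Var]

/-- Satisfaction of an ESL formula at a point `(r,m)` of an interpreted system,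
relative to a context `Γ` interpreting variables as global states. -/
def esat (M : IS Gl Idx Loc PropV) : ESL Idx PropV Var → (Var → Gl) → (ℕ → Gl) → ℕ → Prop
  | .tt, _, _, _ => True
  | .atom p, _, r, m => p ∈ M.val (r m)
  | .neg φ, Γ, r, m => ¬ esat M φ Γ r m
  | .conj φ ψ, Γ, r, m => esat M φ Γ r m ∧ esat M ψ Γ r m
  | .next φ, Γ, r, m => esat M φ Γ r (m+1)
  | .until_ φ ψ, Γ, r, m =>
      ∃ m', m ≤ m' ∧ esat M ψ Γ r m' ∧ ∀ k, m ≤ k → k < m' → esat M φ Γ r k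
  | .box φ, Γ, r, m => ∀ m', m ≤ m' → esat M φ Γ r m'
  | .all φ, Γ, r, m => ∀ r' ∈ M.runs, (∀ k, k ≤ m → r' k = r k) → esat M φ Γ r' m
  | .exv x φ, Γ, r, m => ∃ r' ∈ M.runs, ∃ m' : ℕ, esat M φ (Function.update Γ x (r' m')) r m
  | .leq i x, Γ, r, m => M.sameLoc i (r m) (Γ x)
  | .dk Grp φ, Γ, r, m =>
      ∀ r' ∈ M.runs, ∀ m', (∀ i ∈ Grp, M.sameLoc i (r' m') (r m)) → esat M φ Γ r' m'
  | .ck Grp φ, Γ, r, m =>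
      ∀ r' ∈ M.runs, ∀ m', ckRel M Grp (r, m) (r', m') → esat M φ Γ r' m'

namespace ESL
def ff : ESL Idx PropV Var := .neg .tt
def impf (φ ψ : ESL Idx PropV Var) : ESL Idx PropV Var := .neg (.conj φ (.neg ψ))
def orf (φ ψ : ESL Idx PropV Var) : ESL Idx PropV Var := .neg (.conj (.neg φ) (.neg ψ))
def iffF (φ ψ : ESL Idx PropV Var) : ESL Idx PropV Var := .conj (impf φ ψ) (impf ψ φ)
def EX (φ : ESL Idx PropV Var) : ESL Idx PropV Var := .neg (.all (.neg (.next φ)))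
end ESL

def bigConj (l : List (ESL Idx PropV Var)) : ESL Idx PropV Var := l.foldr .conj .tt
def bigDisj (l : List (ESL Idx PropV Var)) : ESL Idx PropV Var := l.foldr ESL.orf ESL.ff

/-- The local-state function of strategy space: the `e` component is the state,
the `i` component is agent `i`'s observation, and the `σ(i)` component is
agent `i`'s strategy. -/
def sLoc (E : Env Agent State Obs Act PropV) :
    SIdx Agent → GState Agent State Act → State ⊕ Obs ⊕ Strategy State Act
  | .env, g => Sum.inl g.1
  | .ag i, g => Sum.inr (Sum.inl (E.obs i g.1))
  | .str i, g => Sum.inr (Sum.inr (g.2 i))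

/-- The runs of the strategy space `I(Env,Σ)`. -/
def IsRun (E : Env Agent State Obs Act PropV) (Sig : Set (JointStrategy Agent State Act))
    (r : ℕ → GState Agent State Act) : Prop :=
  (r 0).1 ∈ E.init ∧ (r 0).2 ∈ Sig ∧
  ∀ m, (r (m+1)).2 = (r m).2 ∧
    ∃ a, (∀ j, a j ∈ (r m).2 j (r m).1) ∧ E.trans (r m).1 a (r (m+1)).1

/-- The strategy space interpreted system `I(Env,Σ)`. -/
def stratSpace (E : Env Agent State Obs Act PropV) (Sig : Set (JointStrategy Agent State Act)) :
    IS (GState Agent State Act) (SIdx Agent) (State ⊕ Obs ⊕ Strategy State Act) PropV :=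
  { runs := {r | IsRun E Sig r}, loc := sLoc E, val := fun g => E.val g.1 }

/-- `Env[S/I]`: the environment with all states initial. -/
def Env.allInit (E : Env Agent State Obs Act PropV) : Env Agent State Obs Act PropV :=
  { E with init := Set.univ }

end Paper
namespace Paper

/-- Propositional formulas over variables `x₁,…,xₙ`. -/
inductive PForm (n : ℕ) : Type
  | var (j : Fin n) : PForm n
  | neg (φ : PForm n) : PForm n
  | conj (φ ψ : PForm n) : PForm n

/-- Evaluation of a propositional formula under an assignment. -/
def PForm.eval {n : ℕ} (v : Fin n → Bool) : PForm n → Prop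
  | .var j => v j = true
  | .neg φ => ¬ PForm.eval v φ
  | .conj φ ψ => PForm.eval v φ ∧ PForm.eval v ψ

/-- Truth of the quantified Boolean formula `Q₁x₁…Qₙxₙ(γ)` with alternating
quantifiers `∃∀∃∀…`, the variables being assigned in order: `k` counts the
variables already assigned. -/
def altTruth (n : ℕ) (γ : PForm n) : (k : ℕ) → (Fin n → Bool) → Prop
  | k, v =>
    if h : k < n then
      if k % 2 = 0 then ∃ b, altTruth n γ (k+1) (Function.update v ⟨k, h⟩ b)
      else ∀ b, altTruth n γ (k+1) (Function.update v ⟨k, h⟩ b)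
    else γ.eval v
  termination_by k => n - k
  decreasing_by all_goals omega

/-- The QBF `∃x₁∀x₂…Qₙxₙ(γ)` is true. -/
def QBFtrue (n : ℕ) (γ : PForm n) : Prop := altTruth n γ 0 (fun _ => false)

/-- States of the environment `Env_φ`: the initial state `s₀` and the states
`s_{t,j,k}` (here `t : Fin n` codes time `t+1`). -/
inductive QSt (n : ℕ) : Type
  | s0 : QSt n
  | cell (t : Fin n) (j k : Bool) : QSt n

/-- Both agents observe only the moment of time. -/
def qObs {n : ℕ} : Fin 2 → QSt n → ℕ
  | _, .s0 => 0
  | _, .cell t _ _ => t.1 + 1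

/-- The propositional assignment: `Sum.inl t` is the proposition `p_t`, and
`Sum.inr false`, `Sum.inr true` are `q₁`, `q₂`. -/
def qVal {n : ℕ} : QSt n → Set (ℕ ⊕ Bool)
  | .s0 => {Sum.inl 0}
  | .cell t j k =>
      {Sum.inl (t.1 + 1)} ∪ (if j then {Sum.inr false} else ∅) ∪
        (if k then {Sum.inr true} else ∅)

/-- The transitions of `Env_φ`: the joint action chosen at time `t` is recorded
in the state at time `t+1`, and the final states loop. -/
inductive qTrans {n : ℕ} : QSt n → (Fin 2 → Bool) → QSt n → Prop
  | start (a : Fin 2 → Bool) (h : 0 < n) :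
      qTrans .s0 a (.cell ⟨0, h⟩ (a 0) (a 1))
  | step (t : Fin n) (j k : Bool) (a : Fin 2 → Bool) (h : t.1 + 1 < n) :
      qTrans (.cell t j k) a (.cell ⟨t.1 + 1, h⟩ (a 0) (a 1))
  | last (t : Fin n) (j k : Bool) (a : Fin 2 → Bool) (h : t.1 + 1 = n) :
      qTrans (.cell t j k) a (.cell t j k)

/-- The two-agent environment `Env_φ` encoding a QBF with `n` variables. -/
def qEnv (n : ℕ) (hn : 0 < n) : Env (Fin 2) (QSt n) ℕ Bool (ℕ ⊕ Bool) where
  init := {.s0}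
  acts := fun _ => Set.univ
  trans := qTrans
  obs := qObs
  val := qVal
  acts_ne := fun _ => ⟨true, trivial⟩
  serial := by
    intro s a _
    cases s with
    | s0 => exact ⟨_, qTrans.start a hn⟩
    | cell t j k =>
        by_cases h : t.1 + 1 < n
        · exact ⟨_, qTrans.step t j k a h⟩
        · exact ⟨_, qTrans.last t j k a (by omega)⟩

/-- `val₂(x_j) = K_{σ(2)}(p_{j-1} → EX q₂)`: agent 2's strategy encodes an
assignment making `x_j` true. (Agents are `0`, `1` here, so agent 2 is `1`;
`q₂ = Sum.inr true`.) -/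
def val2 {n : ℕ} (j : Fin n) : ESL (SIdx (Fin 2)) (ℕ ⊕ Bool) Unit :=
  .dk {SIdx.str 1} (ESL.impf (.atom (Sum.inl j.1)) (ESL.EX (.atom (Sum.inr true))))

/-- `γ⁺`: replace each variable `x_j` by `val₂(x_j)`. -/
def gplus {n : ℕ} : PForm n → ESL (SIdx (Fin 2)) (ℕ ⊕ Bool) Unit
  | .var j => val2 j
  | .neg φ => .neg (gplus φ)
  | .conj φ ψ => .conj (gplus φ) (gplus ψ)

/-- `agree(m) = ⋀_{j=1…m} D_{{σ(1),σ(2)}}(p_{j-1} → (EX q₁ ↔ EX q₂))`. -/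
def agreeF (m : ℕ) : ESL (SIdx (Fin 2)) (ℕ ⊕ Bool) Unit :=
  bigConj ((List.range m).map fun j =>
    ESL.dk {SIdx.str 0, SIdx.str 1}
      (ESL.impf (.atom (Sum.inl j))
        (ESL.iffF (ESL.EX (.atom (Sum.inr false))) (ESL.EX (.atom (Sum.inr true))))))

/-- The alternating nesting
`D_{σ(1)}(agree(m) → …)` / `¬D_{σ(2)}¬(agree(m) ∧ …)` for `m = 1,…,n−1`,
with innermost formula `g = γ⁺`. -/
def qLevels (n : ℕ) (g : ESL (SIdx (Fin 2)) (ℕ ⊕ Bool) Unit) :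
    (m : ℕ) → ESL (SIdx (Fin 2)) (ℕ ⊕ Bool) Unit
  | m =>
    let inner := if h : m + 1 < n then qLevels n g (m+1) else g
    if m % 2 = 1 then .dk {SIdx.str 0} (ESL.impf (agreeF m) inner)
    else .neg (.dk {SIdx.str 1} (.neg (.conj (agreeF m) inner)))
  termination_by m => n - m
  decreasing_by omega

/-- The formula `φ*`. -/
def qbfFormula (n : ℕ) (γ : PForm n) : ESL (SIdx (Fin 2)) (ℕ ⊕ Bool) Unit :=
  .neg (.dk (∅ : Set (SIdx (Fin 2))) (.neg (qLevels n (gplus γ) 1)))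


/-!
Both agents observe only the time, so a uniform deterministic strategy amounts to a Boolean
sequence of moves at times `0, …, n - 1`, and the run of a strategy profile is determined by it:
the move of agent `i` at time `t` is recorded by `q_i` at time `t + 1`. Hence `val₂(x_j)` reads
the `j`-th move of agent 2 and `agree(m)` says that the two move sequences coincide below `m`.
Knowing `σ(1)` fixes the moves of agent 1 and leaves those of agent 2 free, and dually for
`σ(2)`; so, by downward induction on `m`, the `m`-th level of `φ*` holds iff the QBF whose first
`m` variables are set to the moves of agent 1 (odd `m`, a `∀` level) or of agent 2 (even `m`, an
`∃` level) is true.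
-/

section Semantics

variable {Gl Idx Loc PropV Var : Type} [DecidableEq Var] {M : IS Gl Idx Loc PropV}
  {φ ψ : ESL Idx PropV Var} {Γ : Var → Gl} {r : ℕ → Gl} {m : ℕ}

theorem esat_impf : esat M (ESL.impf φ ψ) Γ r m ↔ (esat M φ Γ r m → esat M ψ Γ r m) := by
  simp only [ESL.impf, esat]
  tauto

theorem esat_iffF : esat M (ESL.iffF φ ψ) Γ r m ↔ (esat M φ Γ r m ↔ esat M ψ Γ r m) := by
  simp only [ESL.iffF, esat, esat_impf]
  tauto

theorem esat_bigConj (l : List (ESL Idx PropV Var)) :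
    esat M (bigConj l) Γ r m ↔ ∀ φ ∈ l, esat M φ Γ r m := by
  induction l with
  | nil => simp [bigConj, esat]
  | cons φ l ih => simp [bigConj, esat, ← ih]

theorem esat_EX_of_runs_determined (hdet : ∀ r ∈ M.runs, ∀ r' ∈ M.runs, r' 0 = r 0 → r' = r)
    (hr : r ∈ M.runs) : esat M (ESL.EX φ) Γ r m ↔ esat M φ Γ r (m + 1) := by
  simp only [ESL.EX, esat, not_forall, not_not]
  constructor
  · rintro ⟨r', hr', hpre, hφ⟩
    rwa [hdet r hr r' hr' (hpre 0 m.zero_le)] at hφ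
  · exact fun hφ => ⟨r, hr, fun _ _ => rfl, hφ⟩

end Semantics

section StrategySpace

variable {Agent State Obs Act PropV Var : Type} [DecidableEq Var]
  {E : Env Agent State Obs Act PropV} {Sig : Set (JointStrategy Agent State Act)}
  {r : ℕ → GState Agent State Act}

theorem IsRun.snd_eq (hr : IsRun E Sig r) (m : ℕ) : (r m).2 = (r 0).2 := by
  induction m with
  | zero => rfl
  | succ m ih => rw [(hr.2.2 m).1, ih]

theorem exists_isRun (hSig : ∀ σ ∈ Sig, IsJoint E σ) {s : State} (hs : s ∈ E.init)
    {σ : JointStrategy Agent State Act} (hσ : σ ∈ Sig) : ∃ r, IsRun E Sig r ∧ r 0 = (s, σ) := by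
  choose act hact using fun s j => (hSig σ hσ j s).1
  choose next hnext using fun s => E.serial s (act s) fun j => (hSig σ hσ j s).2 (hact s j)
  refine ⟨fun m => (next^[m] s, σ), ⟨hs, hσ, fun m => ⟨rfl, act _, hact _, ?_⟩⟩, rfl⟩
  simpa only [Function.iterate_succ_apply'] using hnext _

theorem esat_dk_str {G : Set (SIdx Agent)} (hG : ∀ i ∈ G, ∃ a, i = .str a)
    (φ : ESL (SIdx Agent) PropV Var) (Γ : Var → GState Agent State Act) (hr : IsRun E Sig r)
    (m : ℕ) :
    esat (stratSpace E Sig) (.dk G φ) Γ r m ↔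
      ∀ r', IsRun E Sig r' → (∀ a, .str a ∈ G → (r' 0).2 a = (r 0).2 a) →
        ∀ m', esat (stratSpace E Sig) φ Γ r' m' := by
  have hloc : ∀ r', IsRun E Sig r' → ∀ m',
      (∀ i ∈ G, (stratSpace E Sig).sameLoc i (r' m') (r m)) ↔
        ∀ a, .str a ∈ G → (r' 0).2 a = (r 0).2 a := by
    intro r' hr' m'
    simp only [IS.sameLoc, stratSpace]
    constructor
    · intro h a ha
      simpa [sLoc, hr.snd_eq, hr'.snd_eq] using h _ ha
    · rintro h _ hi
      obtain ⟨a, rfl⟩ := hG _ hi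
      simp [sLoc, hr.snd_eq, hr'.snd_eq, h a hi]
  simp only [esat]
  constructor
  · exact fun h r' hr' hfix m' => h r' hr' m' ((hloc r' hr' m').mpr hfix)
  · exact fun h r' hr' m' hsame => h r' hr' ((hloc r' hr' m').mp hsame) m'

end StrategySpace

section QBF

variable {n : ℕ}

def EqBelow (k : ℕ) (v w : Fin n → Bool) : Prop := ∀ j : Fin n, j.1 < k → v j = w j

theorem eqBelow_update (v : Fin n → Bool) {k : ℕ} (hk : k < n) (b : Bool) :
    EqBelow k v (Function.update v ⟨k, hk⟩ b) := fun _ hj =>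
  (Function.update_of_ne (Fin.ne_of_lt hj) b v).symm

theorem EqBelow.update {k : ℕ} {v w : Fin n → Bool} (h : EqBelow k v w) (hk : k < n)
    (b : Bool) :
    EqBelow (k + 1) (Function.update v ⟨k, hk⟩ b) (Function.update w ⟨k, hk⟩ b) := by
  intro j hj
  rcases eq_or_ne j ⟨k, hk⟩ with rfl | hne
  · simp
  · rw [Function.update_of_ne hne, Function.update_of_ne hne]
    exact h j (by have : j.1 ≠ k := fun h => hne (Fin.ext h); omega)

theorem altTruth_congr (γ : PForm n) {k : ℕ} {v w : Fin n → Bool} (h : EqBelow k v w) :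
    altTruth n γ k v ↔ altTruth n γ k w := by
  rw [altTruth, altTruth]
  split_ifs with hk
  · exact exists_congr fun b => altTruth_congr γ (h.update hk b)
  · exact forall_congr' fun b => altTruth_congr γ (h.update hk b)
  · rw [show v = w from funext fun j => h j (by omega)]
termination_by n - k

theorem altTruth_self (γ : PForm n) (v : Fin n → Bool) : altTruth n γ n v ↔ γ.eval v := by
  rw [altTruth, dif_neg (lt_irrefl n)]

theorem altTruth_forall (γ : PForm n) {k : ℕ} (hk : k < n) (hodd : k % 2 = 1)
    (v : Fin n → Bool) :
    altTruth n γ k v ↔ ∀ w, EqBelow k v w → altTruth n γ (k + 1) w := by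
  rw [altTruth, dif_pos hk, if_neg (by omega)]
  refine ⟨fun h w hw => ?_, fun h b => h _ (eqBelow_update v hk b)⟩
  refine (altTruth_congr γ ?_).mp (h (w ⟨k, hk⟩))
  simpa using hw.update hk (w ⟨k, hk⟩)

theorem altTruth_exists (γ : PForm n) {k : ℕ} (hk : k < n) (heven : k % 2 = 0)
    (v : Fin n → Bool) :
    altTruth n γ k v ↔ ∃ w, EqBelow k v w ∧ altTruth n γ (k + 1) w := by
  rw [altTruth, dif_pos hk, if_pos heven]
  refine ⟨fun ⟨b, hb⟩ => ⟨_, eqBelow_update v hk b, hb⟩, fun ⟨w, hw, hwt⟩ => ⟨w ⟨k, hk⟩, ?_⟩⟩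
  refine (altTruth_congr γ ?_).mpr hwt
  simpa using hw.update hk (w ⟨k, hk⟩)

end QBF

section Encoding

variable {n : ℕ}

theorem qObs_eq (i j : Fin 2) (s : QSt n) : qObs i s = qObs j s := by
  cases s <;> rfl

def stateAt : Fin n → QSt n
  | ⟨0, _⟩ => .s0
  | ⟨k + 1, h⟩ => .cell ⟨k, by omega⟩ false false

theorem qObs_stateAt (i : Fin 2) (t : Fin n) : qObs i (stateAt t) = t := by
  match t with
  | ⟨0, _⟩ => rfl
  | ⟨_ + 1, _⟩ => rfl

open Classical in
noncomputable def actionAt (α : Strategy (QSt n) Bool) (t : Fin n) : Bool :=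
  decide (true ∈ α (stateAt t))

def strategyOf (g : Fin n → Bool) : Strategy (QSt n) Bool :=
  fun s => {if h : qObs 0 s < n then g ⟨_, h⟩ else false}

theorem actionAt_strategyOf (g : Fin n → Bool) : actionAt (strategyOf g) = g := by
  funext t
  cases h : g t <;> simp [actionAt, strategyOf, qObs_stateAt, h]

variable (hn : 0 < n)

theorem strategyOf_mem (g : Fin n → Bool) (i : Fin 2) :
    IsStrategy (qEnv n hn) i (strategyOf g) ∧ UniformStrat (qEnv n hn) i (strategyOf g) ∧
      DetStrat (strategyOf g) := by
  refine ⟨fun s => ⟨⟨_, rfl⟩, fun _ _ => trivial⟩, fun s t hst => ?_, fun s => ⟨_, rfl⟩⟩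
  have hst : qObs 0 s = qObs 0 t := by rwa [qObs_eq 0 i, qObs_eq 0 i t]
  simp only [strategyOf, hst]

theorem update_strategyOf_mem {σ : JointStrategy (Fin 2) (QSt n) Bool}
    (hσ : σ ∈ SigmaUnifDet (qEnv n hn)) (i : Fin 2) (g : Fin n → Bool) :
    Function.update σ i (strategyOf g) ∈ SigmaUnifDet (qEnv n hn) := by
  intro j
  rcases eq_or_ne j i with rfl | hj
  · simpa using strategyOf_mem hn g j
  · simpa [Function.update_of_ne hj] using hσ j

theorem eq_singleton_actionAt {i : Fin 2} {α : Strategy (QSt n) Bool}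
    (hu : UniformStrat (qEnv n hn) i α) (hd : DetStrat α) {s : QSt n} {t : Fin n}
    (hs : qObs i s = t) : α s = {actionAt α t} := by
  obtain ⟨a, ha⟩ := hd (stateAt t)
  rw [hu s (stateAt t) (hs.trans (qObs_stateAt i t).symm), ha]
  cases a <;> simp [actionAt, ha]

def clampTime (m : ℕ) : Fin n := ⟨min m (n - 1), by omega⟩

-- Final states loop, so from time `n` on the run stays in its state at time `n`.
def trace (g₁ g₂ : Fin n → Bool) : ℕ → QSt n
  | 0 => .s0
  | m + 1 => .cell (clampTime hn m) (g₁ (clampTime hn m)) (g₂ (clampTime hn m))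

theorem trace_succ (g₁ g₂ : Fin n → Bool) (t : Fin n) :
    trace hn g₁ g₂ (t + 1) = .cell t (g₁ t) (g₂ t) := by
  have : clampTime hn t = t := Fin.ext (by simp [clampTime]; omega)
  simp only [trace, this]

theorem qObs_trace (g₁ g₂ : Fin n → Bool) (i : Fin 2) (m : ℕ) :
    qObs i (trace hn g₁ g₂ m) = min m n := by
  rcases m with _ | m
  · rfl
  · simp only [trace, qObs, clampTime]
    omega

theorem qTrans_functional {s s' s'' : QSt n} {a : Fin 2 → Bool}
    (h' : qTrans s a s') (h'' : qTrans s a s'') : s' = s'' := by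
  cases h' <;> cases h'' <;> first | rfl | omega

theorem qTrans_trace (g₁ g₂ : Fin n → Bool) (m : ℕ) {a : Fin 2 → Bool}
    (ha : ∀ h : m < n, a 0 = g₁ ⟨m, h⟩ ∧ a 1 = g₂ ⟨m, h⟩) :
    qTrans (trace hn g₁ g₂ m) a (trace hn g₁ g₂ (m + 1)) := by
  rcases m with _ | m
  · obtain ⟨h0, h1⟩ := ha hn
    rw [trace_succ hn g₁ g₂ ⟨0, hn⟩, ← h0, ← h1]
    exact .start a hn
  by_cases hm : m + 1 < n
  · obtain ⟨h0, h1⟩ := ha hm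
    rw [trace_succ hn g₁ g₂ ⟨m, by omega⟩, trace_succ hn g₁ g₂ ⟨m + 1, hm⟩, ← h0, ← h1]
    exact .step _ _ _ a hm
  · have : clampTime hn (m + 1) = clampTime hn m := Fin.ext (by simp [clampTime]; omega)
    rw [trace, trace, this]
    exact .last _ _ _ a (by simp [clampTime]; omega)

end Encoding

section Runs

abbrev qSys (n : ℕ) (hn : 0 < n) := stratSpace (qEnv n hn) (SigmaUnifDet (qEnv n hn))

variable {n : ℕ} (hn : 0 < n) {r : ℕ → GState (Fin 2) (QSt n) Bool}
  (Γ : Unit → GState (Fin 2) (QSt n) Bool)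

noncomputable def moves (r : ℕ → GState (Fin 2) (QSt n) Bool) (i : Fin 2) : Fin n → Bool :=
  actionAt ((r 0).2 i)

theorem run_fst_eq (hr : r ∈ (qSys n hn).runs) (m : ℕ) :
    (r m).1 = trace hn (moves r 0) (moves r 1) m := by
  obtain ⟨h0, hσ, hstep⟩ := hr
  induction m with
  | zero => exact h0
  | succ m ih =>
    obtain ⟨-, a, ha, htr⟩ := hstep m
    rw [ih] at ha htr
    refine qTrans_functional htr (qTrans_trace hn _ _ m fun hm => ?_)
    have hact : ∀ j, a j = moves r j ⟨m, hm⟩ := fun j => by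
      have hobs : qObs j (trace hn (moves r 0) (moves r 1) m) = (⟨m, hm⟩ : Fin n) := by
        rw [qObs_trace]
        exact min_eq_left hm.le
      have := ha j
      rwa [IsRun.snd_eq ⟨h0, hσ, hstep⟩,
        eq_singleton_actionAt hn (hσ j).2.1 (hσ j).2.2 hobs] at this
    exact ⟨hact 0, hact 1⟩

theorem run_eq_of_zero {r' : ℕ → GState (Fin 2) (QSt n) Bool} (hr : r ∈ (qSys n hn).runs)
    (hr' : r' ∈ (qSys n hn).runs) (h0 : r' 0 = r 0) : r' = r := by
  funext m
  refine Prod.ext ?_ (by rw [IsRun.snd_eq hr, IsRun.snd_eq hr', h0])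
  rw [run_fst_eq hn hr, run_fst_eq hn hr', moves, moves, moves, moves, h0]

theorem run_fst_succ (hr : r ∈ (qSys n hn).runs) (t : Fin n) :
    (r (t + 1)).1 = .cell t (moves r 0 t) (moves r 1 t) := by
  rw [run_fst_eq hn hr, trace_succ]

theorem exists_run_of_mem {σ : JointStrategy (Fin 2) (QSt n) Bool}
    (hσ : σ ∈ SigmaUnifDet (qEnv n hn)) : ∃ r ∈ (qSys n hn).runs, (r 0).2 = σ := by
  obtain ⟨r, hr, h0⟩ := exists_isRun (fun σ hσ i => (hσ i).1) rfl hσ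
  exact ⟨r, hr, by rw [h0]⟩

theorem esat_EX (hr : r ∈ (qSys n hn).runs) (φ : ESL (SIdx (Fin 2)) (ℕ ⊕ Bool) Unit)
    (m : ℕ) :
    esat (qSys n hn) (ESL.EX φ) Γ r m ↔ esat (qSys n hn) φ Γ r (m + 1) :=
  esat_EX_of_runs_determined (fun _ hr _ hr' => run_eq_of_zero hn hr hr') hr

theorem esat_p (hr : r ∈ (qSys n hn).runs) (t : Fin n) (m : ℕ) :
    esat (qSys n hn) (.atom (Sum.inl t.1)) Γ r m ↔ m = t := by
  change Sum.inl t.1 ∈ qVal (r m).1 ↔ _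
  rw [run_fst_eq hn hr]
  rcases m with _ | m
  · simp [trace, qVal]
    omega
  · cases moves r 0 (clampTime hn m) <;> cases moves r 1 (clampTime hn m) <;>
      simp [trace, qVal, clampTime] <;> omega

theorem esat_EX_q₁ (hr : r ∈ (qSys n hn).runs) (t : Fin n) :
    esat (qSys n hn) (ESL.EX (.atom (Sum.inr false))) Γ r t ↔ moves r 0 t = true := by
  rw [esat_EX hn Γ hr]
  change Sum.inr false ∈ qVal (r (t + 1)).1 ↔ _
  rw [run_fst_succ hn hr]
  simp [qVal]

theorem esat_EX_q₂ (hr : r ∈ (qSys n hn).runs) (t : Fin n) :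
    esat (qSys n hn) (ESL.EX (.atom (Sum.inr true))) Γ r t ↔ moves r 1 t = true := by
  rw [esat_EX hn Γ hr]
  change Sum.inr true ∈ qVal (r (t + 1)).1 ↔ _
  rw [run_fst_succ hn hr]
  simp [qVal]

theorem moves_congr {r' : ℕ → GState (Fin 2) (QSt n) Bool} {i : Fin 2}
    (h : (r' 0).2 i = (r 0).2 i) : moves r' i = moves r i :=
  congrArg actionAt h

theorem esat_dk_p_impf {G : Set (SIdx (Fin 2))} (hG : ∀ i ∈ G, ∃ a, i = .str a) (t : Fin n)
    {ψ : ESL (SIdx (Fin 2)) (ℕ ⊕ Bool) Unit}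
    (hψ : ∀ r' ∈ (qSys n hn).runs, (∀ a, .str a ∈ G → (r' 0).2 a = (r 0).2 a) →
      (esat (qSys n hn) ψ Γ r' t ↔ esat (qSys n hn) ψ Γ r t))
    (hr : r ∈ (qSys n hn).runs) (m : ℕ) :
    esat (qSys n hn) (.dk G (ESL.impf (.atom (Sum.inl t.1)) ψ)) Γ r m ↔
      esat (qSys n hn) ψ Γ r t := by
  rw [esat_dk_str hG _ Γ hr]
  constructor
  · intro h
    exact esat_impf.mp (h r hr (fun _ _ => rfl) t) ((esat_p hn Γ hr t t).mpr rfl)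
  · intro h r' hr' hfix m'
    rw [esat_impf, esat_p hn Γ hr']
    rintro rfl
    exact (hψ r' hr' hfix).mpr h

theorem esat_val2 (hr : r ∈ (qSys n hn).runs) (t : Fin n) (m : ℕ) :
    esat (qSys n hn) (val2 t) Γ r m ↔ moves r 1 t = true := by
  rw [val2, esat_dk_p_impf hn Γ (by simp) t (fun r' hr' hfix => ?_) hr, esat_EX_q₂ hn Γ hr]
  rw [esat_EX_q₂ hn Γ hr', esat_EX_q₂ hn Γ hr, moves_congr (hfix 1 rfl)]

theorem esat_agreeF (hr : r ∈ (qSys n hn).runs) {m : ℕ} (hm : m ≤ n) (mm : ℕ) :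
    esat (qSys n hn) (agreeF m) Γ r mm ↔ EqBelow m (moves r 0) (moves r 1) := by
  have hiff : ∀ r' ∈ (qSys n hn).runs, ∀ t : Fin n,
      esat (qSys n hn) (ESL.iffF (ESL.EX (.atom (Sum.inr false)))
        (ESL.EX (.atom (Sum.inr true)))) Γ r' t ↔ moves r' 0 t = moves r' 1 t := by
    intro r' hr' t
    rw [esat_iffF, esat_EX_q₁ hn Γ hr', esat_EX_q₂ hn Γ hr']
    exact Bool.eq_iff_iff.symm
  have hitem : ∀ t : Fin n, esat (qSys n hn) (ESL.dk {SIdx.str 0, SIdx.str 1}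
      (ESL.impf (.atom (Sum.inl t.1)) (ESL.iffF (ESL.EX (.atom (Sum.inr false)))
        (ESL.EX (.atom (Sum.inr true)))))) Γ r mm ↔ moves r 0 t = moves r 1 t := by
    intro t
    rw [esat_dk_p_impf hn Γ (by simp) t (fun r' hr' hfix => ?_) hr, hiff r hr]
    rw [hiff r' hr', hiff r hr, moves_congr (hfix 0 (by simp)),
      moves_congr (hfix 1 (by simp))]
  simp only [agreeF, esat_bigConj, List.forall_mem_map, List.mem_range]
  exact ⟨fun h t ht => (hitem t).mp (h t ht),
    fun h j hj => (hitem ⟨j, by omega⟩).mpr (h _ hj)⟩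

theorem esat_gplus (hr : r ∈ (qSys n hn).runs) (γ : PForm n) (m : ℕ) :
    esat (qSys n hn) (gplus γ) Γ r m ↔ γ.eval (moves r 1) := by
  induction γ with
  | var t => exact esat_val2 hn Γ hr t m
  | neg φ ih => simp only [gplus, esat, PForm.eval, ih]
  | conj φ ψ ih₁ ih₂ => simp only [gplus, esat, PForm.eval, ih₁, ih₂]

theorem exists_run_update (hr : r ∈ (qSys n hn).runs) (i : Fin 2) (g : Fin n → Bool) :
    ∃ r' ∈ (qSys n hn).runs, moves r' i = g ∧ ∀ j ≠ i, (r' 0).2 j = (r 0).2 j := by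
  obtain ⟨r', hr', h0⟩ := exists_run_of_mem hn (update_strategyOf_mem hn hr.2.1 i g)
  refine ⟨r', hr', ?_, fun j hj => by rw [h0, Function.update_of_ne hj]⟩
  rw [moves, h0, Function.update_self, actionAt_strategyOf]

theorem esat_level_forall (γ : PForm n) {m : ℕ} (hm : m < n) (hodd : m % 2 = 1)
    {ψ : ESL (SIdx (Fin 2)) (ℕ ⊕ Bool) Unit}
    (hψ : ∀ r' ∈ (qSys n hn).runs, ∀ m',
      esat (qSys n hn) ψ Γ r' m' ↔ altTruth n γ (m + 1) (moves r' 1))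
    (hr : r ∈ (qSys n hn).runs) (mm : ℕ) :
    esat (qSys n hn) (.dk {SIdx.str 0} (ESL.impf (agreeF m) ψ)) Γ r mm ↔
      altTruth n γ m (moves r 0) := by
  rw [esat_dk_str (by simp) _ Γ hr, altTruth_forall γ hm hodd]
  constructor
  · intro h w hw
    obtain ⟨r', hr', hw', hfix⟩ := exists_run_update hn hr 1 w
    have h0 := hfix 0 (by decide)
    have := h r' hr' (by simpa using h0) 0
    rwa [esat_impf, esat_agreeF hn Γ hr' hm.le, hψ r' hr', hw', moves_congr h0,
      imp_iff_right hw] at this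
  · intro h r' hr' hfix m'
    rw [esat_impf, esat_agreeF hn Γ hr' hm.le, hψ r' hr', moves_congr (hfix 0 rfl)]
    exact h _

theorem esat_level_exists (γ : PForm n) {m : ℕ} (hm : m < n) (heven : m % 2 = 0)
    {ψ : ESL (SIdx (Fin 2)) (ℕ ⊕ Bool) Unit}
    (hψ : ∀ r' ∈ (qSys n hn).runs, ∀ m',
      esat (qSys n hn) ψ Γ r' m' ↔ altTruth n γ (m + 1) (moves r' 0))
    (hr : r ∈ (qSys n hn).runs) (mm : ℕ) :
    esat (qSys n hn) (.neg (.dk {SIdx.str 1} (.neg (.conj (agreeF m) ψ)))) Γ r mm ↔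
      altTruth n γ m (moves r 1) := by
  change ¬ esat _ (.dk _ _) _ _ _ ↔ _
  rw [esat_dk_str (by simp) _ Γ hr, altTruth_exists γ hm heven]
  simp only [esat, not_forall, not_not, exists_prop]
  constructor
  · rintro ⟨r', hr', hfix, m', hagree, hψr'⟩
    rw [esat_agreeF hn Γ hr' hm.le, moves_congr (hfix 1 rfl)] at hagree
    exact ⟨_, fun j hj => (hagree j hj).symm, (hψ r' hr' m').mp hψr'⟩
  · rintro ⟨w, hw, hwt⟩
    obtain ⟨r', hr', hw', hfix⟩ := exists_run_update hn hr 0 w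
    have h1 := hfix 1 (by decide)
    refine ⟨r', hr', by simpa using h1, 0, ?_, by rwa [hψ r' hr', hw']⟩
    rw [esat_agreeF hn Γ hr' hm.le, hw', moves_congr h1]
    exact fun j hj => (hw j hj).symm

theorem esat_qLevels (hev : Even n) (γ : PForm n) {m : ℕ} (hm₁ : 1 ≤ m) (hm : m < n)
    {r : ℕ → GState (Fin 2) (QSt n) Bool} (hr : r ∈ (qSys n hn).runs) (mm : ℕ) :
    esat (qSys n hn) (qLevels n (gplus γ) m) Γ r mm ↔
      altTruth n γ m (moves r (if m % 2 = 1 then 0 else 1)) := by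
  have hn2 : n % 2 = 0 := Nat.even_iff.mp hev
  have hinner : ∀ r' ∈ (qSys n hn).runs, ∀ m',
      esat (qSys n hn)
          (if _ : m + 1 < n then qLevels n (gplus γ) (m + 1) else gplus γ) Γ r' m' ↔
        altTruth n γ (m + 1) (moves r' (if (m + 1) % 2 = 1 then 0 else 1)) := by
    intro r' hr' m'
    by_cases hlt : m + 1 < n
    · rw [dif_pos hlt]
      exact esat_qLevels hev γ (by omega) hlt hr' m'
    · obtain rfl : m + 1 = n := by omega
      rw [dif_neg hlt, esat_gplus hn Γ hr', if_neg (by omega), altTruth_self]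
  rw [qLevels]
  by_cases hodd : m % 2 = 1
  · rw [if_pos hodd, if_pos hodd]
    rw [if_neg (by omega)] at hinner
    exact esat_level_forall hn Γ γ hm hodd hinner hr mm
  · rw [if_neg hodd, if_neg hodd]
    rw [if_pos (by omega)] at hinner
    exact esat_level_exists hn Γ γ hm (by omega) hinner hr mm
termination_by n - m

theorem esat_qbfFormula (hev : Even n) (γ : PForm n) (hr : r ∈ (qSys n hn).runs) :
    esat (qSys n hn) (qbfFormula n γ) Γ r 0 ↔ ∃ w, altTruth n γ 1 w := by
  have h1n : 1 < n := by obtain ⟨k, rfl⟩ := hev; omega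
  change ¬ esat _ (.dk _ _) _ _ _ ↔ _
  rw [esat_dk_str (by simp) _ Γ hr]
  simp only [esat, not_forall, not_not, exists_prop]
  constructor
  · rintro ⟨r', hr', -, m', h⟩
    exact ⟨_, (esat_qLevels hn Γ hev γ le_rfl h1n hr' m').mp h⟩
  · rintro ⟨w, hw⟩
    obtain ⟨r', hr', hw', -⟩ := exists_run_update hn hr 0 w
    refine ⟨r', hr', by simp, 0, ?_⟩
    rwa [esat_qLevels hn Γ hev γ le_rfl h1n hr', if_pos rfl, hw']

end Runs

theorem qbfTrue_iff (n : ℕ) (hn : 0 < n) (γ : PForm n) :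
    QBFtrue n γ ↔ ∃ w, altTruth n γ 1 w := by
  rw [QBFtrue, altTruth_exists γ hn rfl]
  exact exists_congr fun w => and_iff_right fun j hj => absurd hj (Nat.not_lt_zero _)

/-- the reduction in Theorem 4 of the paper: the QBF
`∃x₁∀x₂…Qₙxₙ(γ)` is true iff `Env_φ, Σ^{unif,det}(Env_φ) ⊨ φ*`. -/
theorem qbf_iff_formula
    (n : ℕ) (hn : 0 < n) (hev : Even n) (γ : PForm n)
    (Γ : Unit → GState (Fin 2) (QSt n) Bool) :
    QBFtrue n γ ↔
      ∀ r ∈ (stratSpace (qEnv n hn) (SigmaUnifDet (qEnv n hn))).runs,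
        esat (stratSpace (qEnv n hn) (SigmaUnifDet (qEnv n hn)))
          (qbfFormula n γ) Γ r 0 := by
  obtain ⟨r₀, hr₀, -⟩ := exists_run_of_mem hn (σ := fun _ => strategyOf fun _ => false)
    fun i => strategyOf_mem hn _ i
  rw [qbfTrue_iff n hn γ]
  exact ⟨fun h r hr => (esat_qbfFormula hn Γ hev γ hr).mpr h,
    fun h => (esat_qbfFormula hn Γ hev γ hr₀).mp (h r₀ hr₀)⟩

end Paper
end

section
/- For every environment Env for agents Ags, every nonempty restrictable and extendable set Σ of group strategies, every ATEL formula φ, and all points (r,m) and (r',m') of the strategy space I(Env[S/I], comp(Σ)): if r_e(m) = r'_e(m'), then the translated formula φ* holds at (r,m) if and only if it holds at (r',m'). In particular, satisfaction of translations of ATEL formulas at a point depends only on the environment state at that point. -/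
namespace Paper

variable {Agent State Obs Act PropV Var : Type}

/-- A group strategy: a partial assignment of strategies to agents; the group
is the domain. -/
abbrev GrpStrategy (Agent State Act : Type) := Agent → Option (Strategy State Act)

def gdom (α : GrpStrategy Agent State Act) : Set Agent := {i | (α i).isSome}

open Classical in
noncomputable def grestrict (α : GrpStrategy Agent State Act) (G : Set Agent) :
    GrpStrategy Agent State Act :=
  fun i => if i ∈ G then α i else none

def Restrictable (Sig : Set (GrpStrategy Agent State Act)) : Prop :=
  ∀ α ∈ Sig, ∀ G ⊆ gdom α, grestrict α G ∈ Sig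

def Extendable (Sig : Set (GrpStrategy Agent State Act)) : Prop :=
  ∀ α ∈ Sig, ∀ G, gdom α ⊆ G → ∃ α' ∈ Sig, gdom α' = G ∧ grestrict α' (gdom α) = α

/-- The completion of a group strategy: agents outside the group get the random
strategy selecting all of their actions. -/
noncomputable def gcomp (E : Env Agent State Obs Act PropV) (α : GrpStrategy Agent State Act) :
    JointStrategy Agent State Act :=
  fun i => (α i).getD (fun _ => E.acts i)

def gcompSet (E : Env Agent State Obs Act PropV) (Sig : Set (GrpStrategy Agent State Act)) :
    Set (JointStrategy Agent State Act) := gcomp E '' Sig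

/-- A path from `ρ 0` consistent with the group strategy `α`: every step is by some
joint action whose `i`-component is allowed by `α_i`, for each `i` in the group. -/
def ConsistentPath (E : Env Agent State Obs Act PropV) (α : GrpStrategy Agent State Act)
    (ρ : ℕ → State) : Prop :=
  ∀ k, ∃ a, E.trans (ρ k) a (ρ (k+1)) ∧ ∀ i β, α i = some β → a i ∈ β (ρ k)

/-- Syntax of alternating temporal epistemic logic ATEL. -/
inductive ATEL (Agent PropV : Type) : Type
  | atom (p : PropV) : ATEL Agent PropV
  | neg (φ : ATEL Agent PropV) : ATEL Agent PropV
  | conj (φ ψ : ATEL Agent PropV) : ATEL Agent PropV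
  | cX (G : Set Agent) (φ : ATEL Agent PropV) : ATEL Agent PropV
  | cG (G : Set Agent) (φ : ATEL Agent PropV) : ATEL Agent PropV
  | cU (G : Set Agent) (φ ψ : ATEL Agent PropV) : ATEL Agent PropV
  | know (i : Agent) (φ : ATEL Agent PropV) : ATEL Agent PropV
  | dk (G : Set Agent) (φ : ATEL Agent PropV) : ATEL Agent PropV
  | ck (G : Set Agent) (φ : ATEL Agent PropV) : ATEL Agent PropV

/-- ATEL satisfaction `Env, s ⊨^Σ φ`, relative to a set `Sig` of group strategies. -/
def atelSat (E : Env Agent State Obs Act PropV) (Sig : Set (GrpStrategy Agent State Act)) :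
    ATEL Agent PropV → State → Prop
  | .atom p, s => p ∈ E.val s
  | .neg φ, s => ¬ atelSat E Sig φ s
  | .conj φ ψ, s => atelSat E Sig φ s ∧ atelSat E Sig ψ s
  | .cX G φ, s => ∃ α ∈ Sig, gdom α = G ∧
      ∀ ρ, ρ 0 = s → ConsistentPath E α ρ → atelSat E Sig φ (ρ 1)
  | .cG G φ, s => ∃ α ∈ Sig, gdom α = G ∧
      ∀ ρ, ρ 0 = s → ConsistentPath E α ρ → ∀ k, atelSat E Sig φ (ρ k)
  | .cU G φ ψ, s => ∃ α ∈ Sig, gdom α = G ∧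
      ∀ ρ, ρ 0 = s → ConsistentPath E α ρ →
        ∃ m, atelSat E Sig ψ (ρ m) ∧ ∀ k, k < m → atelSat E Sig φ (ρ k)
  | .know i φ, s => ∀ t, E.obs i t = E.obs i s → atelSat E Sig φ t
  | .dk G φ, s => ∀ t, (∀ i ∈ G, E.obs i t = E.obs i s) → atelSat E Sig φ t
  | .ck G φ, s => ∀ t, Relation.ReflTransGen (fun u v => ∃ i ∈ G, E.obs i u = E.obs i v) s t →
      atelSat E Sig φ t

/-- The translation `φ*` of ATEL into ESL over strategy space. -/
def trAtel : ATEL Agent PropV → ESL (SIdx Agent) PropV Var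
  | .atom p => .atom p
  | .neg φ => .neg (trAtel φ)
  | .conj φ ψ => .conj (trAtel φ) (trAtel ψ)
  | .know i φ => .dk {SIdx.ag i} (trAtel φ)
  | .dk G φ => .dk (SIdx.ag '' G) (trAtel φ)
  | .ck G φ => .ck (SIdx.ag '' G) (trAtel φ)
  | .cX G φ => .neg (.dk {SIdx.env} (.neg
      (.dk (insert SIdx.env (SIdx.str '' G)) (.next (trAtel φ)))))
  | .cG G φ => .neg (.dk {SIdx.env} (.neg
      (.dk (insert SIdx.env (SIdx.str '' G)) (.box (trAtel φ)))))
  | .cU G φ ψ => .neg (.dk {SIdx.env} (.neg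
      (.dk (insert SIdx.env (SIdx.str '' G)) (.until_ (trAtel φ) (trAtel ψ)))))

end Paper
namespace Paper

section Aux

variable {Agent State Obs Act PropV Var : Type} [DecidableEq Var]

/-- An index whose local-state component depends only on the environment state. -/
def StateOnly (E : Env Agent State Obs Act PropV) (i : SIdx Agent) : Prop :=
  ∀ g g' : GState Agent State Act, g.1 = g'.1 → sLoc (Act := Act) E i g = sLoc E i g'

lemma stateOnly_env (E : Env Agent State Obs Act PropV) :
    StateOnly (Act := Act) E SIdx.env := fun g g' hg => by simp [sLoc, hg]

lemma stateOnly_ag (E : Env Agent State Obs Act PropV) (i : Agent) :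
    StateOnly (Act := Act) E (SIdx.ag i) := fun g g' hg => by simp [sLoc, hg]

lemma dk_congr (E : Env Agent State Obs Act PropV)
    (Sg : Set (JointStrategy Agent State Act)) (Grp : Set (SIdx Agent))
    (hG : ∀ i ∈ Grp, StateOnly (Act := Act) E i)
    (ψ : ESL (SIdx Agent) PropV Var) (Γ : Var → GState Agent State Act)
    (r r' : ℕ → GState Agent State Act) (m m' : ℕ)
    (h : (r m).1 = (r' m').1) :
    esat (stratSpace E Sg) (.dk Grp ψ) Γ r m ↔
      esat (stratSpace E Sg) (.dk Grp ψ) Γ r' m' := by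
  show (∀ q ∈ (stratSpace E Sg).runs, ∀ n, _ → _) ↔ _
  constructor <;> intro H q hq n hc <;> refine H q hq n (fun i hi => ?_) <;>
    have hc' := hc i hi <;> unfold IS.sameLoc at hc' ⊢ <;> rw [hc']
  · exact hG i hi _ _ h.symm
  · exact hG i hi _ _ h

lemma ck_mono (E : Env Agent State Obs Act PropV)
    (Sg : Set (JointStrategy Agent State Act)) (Grp : Set (SIdx Agent))
    (hG : ∀ i ∈ Grp, StateOnly (Act := Act) E i)
    (ψ : ESL (SIdx Agent) PropV Var) (Γ : Var → GState Agent State Act)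
    (r r' : ℕ → GState Agent State Act) (m m' : ℕ)
    (hr : r ∈ (stratSpace E Sg).runs)
    (h : (r m).1 = (r' m').1)
    (hψ : esat (stratSpace E Sg) ψ Γ r m → esat (stratSpace E Sg) ψ Γ r' m') :
    esat (stratSpace E Sg) (.ck Grp ψ) Γ r m →
      esat (stratSpace E Sg) (.ck Grp ψ) Γ r' m' := by
  intro H q hq n hc
  rcases hc.cases_head with heq | ⟨c, hstep, hrest⟩
  · obtain ⟨rfl, rfl⟩ : r' = q ∧ m' = n := Prod.ext_iff.1 heq
    exact hψ (H r hr m Relation.ReflTransGen.refl)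
  · obtain ⟨hc1, i, hi, hloc⟩ := hstep
    refine H q hq n (Relation.ReflTransGen.head ⟨hc1, i, hi, ?_⟩ hrest)
    exact (hG i hi _ _ h).trans hloc

end Aux

/-- satisfaction of translated ATEL formulas at a point of the
strategy space `I(Env[S/I], comp(Σ))` depends only on the environment state at
that point. -/
theorem trAtel_state_dependent
    {Agent State Obs Act PropV Var : Type} [Finite Agent] [DecidableEq Var]
    (E : Env Agent State Obs Act PropV)
    (Sig : Set (GrpStrategy Agent State Act))
    (hne : Sig.Nonempty) (hres : Restrictable Sig) (hext : Extendable Sig)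
    (φ : ATEL Agent PropV) (Γ : Var → GState Agent State Act)
    (r r' : ℕ → GState Agent State Act)
    (hr : r ∈ (stratSpace E.allInit (gcompSet E Sig)).runs)
    (hr' : r' ∈ (stratSpace E.allInit (gcompSet E Sig)).runs)
    (m m' : ℕ) (h : (r m).1 = (r' m').1) :
    esat (stratSpace E.allInit (gcompSet E Sig)) (trAtel φ) Γ r m ↔
      esat (stratSpace E.allInit (gcompSet E Sig)) (trAtel φ) Γ r' m' := by
  induction φ generalizing r r' m m' with
  | atom p =>
    show p ∈ E.val (r m).1 ↔ p ∈ E.val (r' m').1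
    rw [h]
  | neg φ ih => exact not_congr (ih r r' hr hr' m m' h)
  | conj φ ψ ihφ ihψ =>
    exact and_congr (ihφ r r' hr hr' m m' h) (ihψ r r' hr hr' m m' h)
  | know i φ ih =>
    exact dk_congr E.allInit _ _
      (fun j hj => by rcases hj with rfl; exact stateOnly_ag _ _) _ Γ r r' m m' h
  | dk G φ ih =>
    exact dk_congr E.allInit _ _
      (fun j hj => by obtain ⟨k, -, rfl⟩ := hj; exact stateOnly_ag _ _) _ Γ r r' m m' h
  | ck G φ ih =>
    refine ⟨ck_mono E.allInit _ _ ?_ _ Γ r r' m m' hr h (ih r r' hr hr' m m' h).1,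
            ck_mono E.allInit _ _ ?_ _ Γ r' r m' m hr' h.symm (ih r r' hr hr' m m' h).2⟩ <;>
      exact fun j hj => by obtain ⟨k, -, rfl⟩ := hj; exact stateOnly_ag _ _
  | cX G φ ih =>
    exact not_congr (dk_congr E.allInit _ _
      (fun j hj => by rcases hj with rfl; exact stateOnly_env _) _ Γ r r' m m' h)
  | cG G φ ih =>
    exact not_congr (dk_congr E.allInit _ _
      (fun j hj => by rcases hj with rfl; exact stateOnly_env _) _ Γ r r' m m' h)
  | cU G φ ψ ihφ ihψ =>
    exact not_congr (dk_congr E.allInit _ _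
      (fun j hj => by rcases hj with rfl; exact stateOnly_env _) _ Γ r r' m m' h)

end Paper
end

section
/- For every environment Env for agents Ags, every set Σ of joint strategies, every CTL*K formula φ over the agents Ags ∪ σ(Ags) ∪ {e} (i.e., an ESL formula not containing ∃x or ≈), and every point (r,m) of the strategy space I(Env,Σ): Aφ holds at (r,m) if and only if D_{{e}∪σ(Ags)}φ holds at (r,m). That is, in strategy space the branching operator A is equivalent to the distributed knowledge operator for the environment together with all strategy agents. -/
namespace Paper

variable {Idx PropV Var : Type}

/-- CTL*K formulas: ESL formulas not containing `∃x` or `i≈x`. -/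
inductive NoHyb : ESL Idx PropV Var → Prop
  | tt : NoHyb .tt
  | atom (p : PropV) : NoHyb (.atom p)
  | neg {φ} : NoHyb φ → NoHyb (.neg φ)
  | conj {φ ψ} : NoHyb φ → NoHyb ψ → NoHyb (.conj φ ψ)
  | next {φ} : NoHyb φ → NoHyb (.next φ)
  | until_ {φ ψ} : NoHyb φ → NoHyb ψ → NoHyb (.until_ φ ψ)
  | box {φ} : NoHyb φ → NoHyb (.box φ)
  | all {φ} : NoHyb φ → NoHyb (.all φ)
  | dk (G : Set Idx) {φ} : NoHyb φ → NoHyb (.dk G φ)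
  | ck (G : Set Idx) {φ} : NoHyb φ → NoHyb (.ck G φ)

section Aux

variable {Agent State Obs Act : Type} [DecidableEq Var]

/-- Splice two runs: follow `r` up to time `m`, then follow `s` from time `m'`. -/
def splice (r : ℕ → GState Agent State Act) (m : ℕ)
    (s : ℕ → GState Agent State Act) (m' : ℕ) : ℕ → GState Agent State Act :=
  fun k => if k ≤ m then r k else s (m' + (k - m))

lemma splice_le {r : ℕ → GState Agent State Act} {m : ℕ}
    {s : ℕ → GState Agent State Act} {m' : ℕ} {k : ℕ} (hk : k ≤ m) :
    splice r m s m' k = r k := by simp [splice, hk]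

lemma splice_shift {r : ℕ → GState Agent State Act} {m : ℕ}
    {s : ℕ → GState Agent State Act} {m' : ℕ} (h : r m = s m') (k : ℕ) :
    splice r m s m' (m + k) = s (m' + k) := by
  rcases Nat.eq_zero_or_pos k with hk | hk
  · subst hk; simpa [splice] using h
  · have h1 : ¬ m + k ≤ m := by omega
    have h2 : m + k - m = k := by omega
    simp [splice, h1, h2]

lemma splice_run {E : Env Agent State Obs Act PropV}
    {Sig : Set (JointStrategy Agent State Act)}
    {r s : ℕ → GState Agent State Act} {m m' : ℕ}
    (hr : IsRun E Sig r) (hs : IsRun E Sig s) (h : r m = s m') :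
    IsRun E Sig (splice r m s m') := by
  refine ⟨?_, ?_, ?_⟩
  · rw [splice_le (Nat.zero_le m)]; exact hr.1
  · rw [splice_le (Nat.zero_le m)]; exact hr.2.1
  · intro n
    rcases le_or_gt (n + 1) m with hn | hn
    · rw [splice_le hn, splice_le (by omega : n ≤ m)]
      exact hr.2.2 n
    · -- n ≥ m
      have hnm : m ≤ n := by omega
      have e1 : splice r m s m' n = s (m' + (n - m)) := by
        have e := splice_shift h (n - m)
        rwa [show m + (n - m) = n from by omega] at e
      have e2 : splice r m s m' (n + 1) = s (m' + (n - m) + 1) := by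
        have e := splice_shift h (n - m + 1)
        rwa [show m + (n - m + 1) = n + 1 from by omega,
          show m' + (n - m + 1) = m' + (n - m) + 1 from by omega] at e
      rw [e1, e2]
      exact hs.2.2 (m' + (n - m))

/-- Satisfaction of CTL*K formulas in strategy space is invariant under
shifting between runs with identical suffixes. -/
lemma esat_shift {E : Env Agent State Obs Act PropV}
    {Sig : Set (JointStrategy Agent State Act)}
    {φ : ESL (SIdx Agent) PropV Var} (hφ : NoHyb φ) :
    ∀ (Γ : Var → GState Agent State Act) (r : ℕ → GState Agent State Act),
      IsRun E Sig r → ∀ (r' : ℕ → GState Agent State Act), IsRun E Sig r' →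
      ∀ (m m' : ℕ), (∀ k, r (m + k) = r' (m' + k)) →
      esat (stratSpace E Sig) φ Γ r m → esat (stratSpace E Sig) φ Γ r' m' := by
  induction hφ with
  | tt => intro Γ r hr r' hr' m m' h H; trivial
  | atom p =>
      intro Γ r hr r' hr' m m' h H
      have h0 : r m = r' m' := by simpa using h 0
      show p ∈ (stratSpace E Sig).val (r' m')
      rw [← h0]; exact H
  | neg hφ ih =>
      intro Γ r hr r' hr' m m' h H
      intro Hc
      exact H (ih Γ r' hr' r hr m' m (fun k => (h k).symm) Hc)
  | conj hφ hψ ih1 ih2 =>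
      intro Γ r hr r' hr' m m' h H
      exact ⟨ih1 Γ r hr r' hr' m m' h H.1, ih2 Γ r hr r' hr' m m' h H.2⟩
  | next hφ ih =>
      intro Γ r hr r' hr' m m' h H
      exact ih Γ r hr r' hr' (m + 1) (m' + 1)
        (fun k => by
          have e1 : m + 1 + k = m + (1 + k) := by omega
          have e2 : m' + 1 + k = m' + (1 + k) := by omega
          rw [e1, e2]; exact h (1 + k)) H
  | until_ hφ hψ ih1 ih2 =>
      intro Γ r hr r' hr' m m' h H
      obtain ⟨n, hmn, hψn, hmid⟩ := H
      refine ⟨m' + (n - m), by omega, ?_, ?_⟩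
      · refine ih2 Γ r hr r' hr' n (m' + (n - m))
          (fun k => by
            have e1 : n + k = m + (n - m + k) := by omega
            have e2 : m' + (n - m) + k = m' + (n - m + k) := by omega
            rw [e1, e2]; exact h (n - m + k)) hψn
      · intro k hk1 hk2
        have hjn : m + (k - m') < n := by omega
        refine ih1 Γ r hr r' hr' (m + (k - m')) k
          (fun t => by
            have e1 : m + (k - m') + t = m + (k - m' + t) := by omega
            have e2 : k + t = m' + (k - m' + t) := by omega
            rw [e1, e2]; exact h (k - m' + t))
          (hmid _ (by omega) hjn)
  | box hφ ih =>
      intro Γ r hr r' hr' m m' h H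
      intro k hk
      refine ih Γ r hr r' hr' (m + (k - m')) k
        (fun t => by
          have e1 : m + (k - m') + t = m + (k - m' + t) := by omega
          have e2 : k + t = m' + (k - m' + t) := by omega
          rw [e1, e2]; exact h (k - m' + t))
        (H _ (by omega))
  | all hφ ih =>
      intro Γ r hr r' hr' m m' h H
      intro s' hs' hag
      have h0 : r m = r' m' := by simpa using h 0
      have hsm : r m = s' m' := by rw [h0, ← hag m' le_rfl]
      have hs'run : IsRun E Sig s' := hs'
      have hrun : IsRun E Sig (splice r m s' m') := splice_run hr hs'run hsm
      have hagree : ∀ k, k ≤ m → splice r m s' m' k = r k := fun k hk => splice_le hk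
      have H1 : esat (stratSpace E Sig) _ Γ (splice r m s' m') m := H _ hrun hagree
      exact ih Γ (splice r m s' m') hrun s' hs'run m m' (splice_shift hsm) H1
  | dk G hφ _ =>
      intro Γ r hr r' hr' m m' h H
      have h0 : r m = r' m' := by simpa using h 0
      intro s hs k hloc
      refine H s hs k (fun i hi => ?_)
      show (stratSpace E Sig).loc i (s k) = (stratSpace E Sig).loc i (r m)
      rw [h0]; exact hloc i hi
  | ck G hφ ih =>
      intro Γ r hr r' hr' m m' h H
      have h0 : r m = r' m' := by simpa using h 0
      intro s hs k hrel
      rcases Relation.ReflTransGen.cases_head hrel with heq | ⟨q, hstep, hrest⟩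
      · obtain ⟨hs1, hs2⟩ := Prod.mk.injEq _ _ _ _ ▸ heq
        subst hs1; subst hs2
        have Hrm : esat (stratSpace E Sig) _ Γ r m := H r hr m Relation.ReflTransGen.refl
        exact ih Γ r hr r' hr' m m' h Hrm
      · refine H s hs k (Relation.ReflTransGen.head ⟨hstep.1, ?_⟩ hrest)
        obtain ⟨i, hi, hsl⟩ := hstep.2
        refine ⟨i, hi, ?_⟩
        show (stratSpace E Sig).loc i (r m) = (stratSpace E Sig).loc i (q.1 q.2)
        rw [h0]; exact hsl

end Aux

/-- in strategy space, the branching operator `A` is equivalent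
to the distributed knowledge operator `D_{{e} ∪ σ(Ags)}` on CTL*K formulas. -/
theorem all_eq_dk_env_strats
    {Agent State Obs Act : Type} [DecidableEq Var]
    (E : Env Agent State Obs Act PropV)
    (Sig : Set (JointStrategy Agent State Act))
    (φ : ESL (SIdx Agent) PropV Var) (hφ : NoHyb φ)
    (Γ : Var → GState Agent State Act)
    (r : ℕ → GState Agent State Act) (hr : r ∈ (stratSpace E Sig).runs) (m : ℕ) :
    esat (stratSpace E Sig) (.all φ) Γ r m ↔
      esat (stratSpace E Sig)
        (.dk (insert SIdx.env (Set.range SIdx.str)) φ) Γ r m := by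
  have hrrun : IsRun E Sig r := hr
  constructor
  · intro hA s hs k hloc
    have hsrun : IsRun E Sig s := hs
    have h1 : (s k).1 = (r m).1 := by
      have := hloc SIdx.env (Set.mem_insert _ _)
      simpa [IS.sameLoc, stratSpace, sLoc] using this
    have h2 : ∀ i, (s k).2 i = (r m).2 i := by
      intro i
      have := hloc (SIdx.str i) (Set.mem_insert_of_mem _ ⟨i, rfl⟩)
      simpa [IS.sameLoc, stratSpace, sLoc] using this
    have heq : r m = s k := (Prod.ext_iff.mpr ⟨h1, funext h2⟩).symm
    have hrun : IsRun E Sig (splice r m s k) := splice_run hrrun hsrun heq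
    have H1 : esat (stratSpace E Sig) φ Γ (splice r m s k) m :=
      hA _ hrun (fun t ht => splice_le ht)
    exact esat_shift hφ Γ (splice r m s k) hrun s hsrun m k (splice_shift heq) H1
  · intro hD s hs hag
    refine hD s hs m (fun i hi => ?_)
    show (stratSpace E Sig).loc i (s m) = (stratSpace E Sig).loc i (r m)
    rw [hag m le_rfl]

end Paper
end
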